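/- (q-derivative formulas.) For every integer n ≥ 1 and all x ∈ ℂ, x ≠ 0: D_{q,x} B_{n,q}(x) = [n]_q (B_{n−1,q}(x) + B_{n−1,q}(qx))/2, D_{q,x} E_{n,q}(x) = [n]_q (E_{n−1,q}(x) + E_{n−1,q}(qx))/2, and D_{q,x} G_{n,q}(x) = [n]_q (G_{n−1,q}(x) + G_{n−1,q}(qx))/2. -/

import Mathlib

open Finset PowerSeries

/-- The `q`-number `[n]_q = (1 - q^n)/(1 - q)`. -/
noncomputable def qNum (q : ℂ) (n : ℕ) : ℂ := (1 - q ^ n) / (1 - q)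

/-- The `q`-factorial `[n]_q!`. -/
noncomputable def qFact (q : ℂ) : ℕ → ℂ
  | 0 => 1
  | n + 1 => qNum q (n + 1) * qFact q n

/-- The `q`-shifted factorial `(a; q)_n = ∏_{j=0}^{n-1} (1 - q^j a)`. -/
noncomputable def qShift (a q : ℂ) (n : ℕ) : ℂ := ∏ j ∈ Finset.range n, (1 - q ^ j * a)

/-- The Gaussian binomial coefficient `[n choose k]_q = (q;q)_n / ((q;q)_{n-k} (q;q)_k)`. -/
noncomputable def qBinom (q : ℂ) (n k : ℕ) : ℂ :=
  qShift q q n / (qShift q q (n - k) * qShift q q k)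

/-- The formal power series (in `t`) `𝓔_q(tx) = Σ_{n≥0} (-1;q)_n (x)^n t^n / (2^n [n]_q!)`. -/
noncomputable def qExp (q x : ℂ) : PowerSeries ℂ :=
  PowerSeries.mk fun n => qShift (-1) q n * x ^ n / (2 ^ n * qFact q n)

/-- The generating series `Σ_{n≥0} a_n t^n / [n]_q!` of a sequence `a`. -/
noncomputable def qGen (q : ℂ) (a : ℕ → ℂ) : PowerSeries ℂ :=
  PowerSeries.mk fun n => a n / qFact q n

/-- The `q`-addition `(x ⊕_q y)^n`. -/
noncomputable def qAdd (q x y : ℂ) (n : ℕ) : ℂ :=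
  ∑ k ∈ Finset.range (n + 1),
    qBinom q n k * (qShift (-1) q k * qShift (-1) q (n - k) / 2 ^ n) * x ^ k * y ^ (n - k)

/-! The key identity is `𝓔_q(tx) - 𝓔_q(qtx) = ((1 - q)xt/2) (𝓔_q(tx) + 𝓔_q(qtx))`, which holds
coefficientwise because `(-1;q)_{n+1} = (-1;q)_n (1 + q^n)` and `[n+1]_q! = [n+1]_q [n]_q!`.
Each of the three generating functions has the form `F(t) 𝓔_q(tx) / D(t)` with `D ≠ 0`, so the
same identity holds for the generating series of `f(x) - f(qx)` and `f(x) + f(qx)`, and comparing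
coefficients of `t^n / [n]_q!` gives the formulas. -/

lemma pow_succ_ne_one_of_norm_lt_one {q : ℂ} (hq : ‖q‖ < 1) (n : ℕ) : q ^ (n + 1) ≠ 1 := by
  intro h
  have : ‖q‖ ^ (n + 1) < 1 := pow_lt_one₀ (norm_nonneg q) hq n.succ_ne_zero
  rw [← norm_pow, h, norm_one] at this
  exact lt_irrefl 1 this

section qNonRootOfUnity

variable {q : ℂ}

lemma one_sub_pow_succ_ne_zero (hq : ∀ n, q ^ (n + 1) ≠ 1) (n : ℕ) : 1 - q ^ (n + 1) ≠ 0 :=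
  sub_ne_zero.mpr (hq n).symm

lemma one_sub_ne_zero_of_pow_succ_ne_one (hq : ∀ n, q ^ (n + 1) ≠ 1) : 1 - q ≠ 0 := by
  simpa using one_sub_pow_succ_ne_zero hq 0

lemma qNum_succ_ne_zero (hq : ∀ n, q ^ (n + 1) ≠ 1) (n : ℕ) : qNum q (n + 1) ≠ 0 :=
  div_ne_zero (one_sub_pow_succ_ne_zero hq n) (one_sub_ne_zero_of_pow_succ_ne_one hq)

lemma qFact_ne_zero (hq : ∀ n, q ^ (n + 1) ≠ 1) (n : ℕ) : qFact q n ≠ 0 := by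
  induction n with
  | zero => exact one_ne_zero
  | succ n ih => exact mul_ne_zero (qNum_succ_ne_zero hq n) ih

lemma qGen_add (a b : ℕ → ℂ) : qGen q a + qGen q b = qGen q (a + b) := by
  ext n
  simp [qGen, add_div]

lemma qGen_sub (a b : ℕ → ℂ) : qGen q a - qGen q b = qGen q (a - b) := by
  ext n
  simp [qGen, sub_div]

lemma qGen_eq_C_mul_X_mul_qGen_iff (hq : ∀ n, q ^ (n + 1) ≠ 1) (a b : ℕ → ℂ) (c : ℂ) :
    qGen q a = C c * X * qGen q b ↔ a 0 = 0 ∧ ∀ n, a (n + 1) = c * qNum q (n + 1) * b n := by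
  have hcoeff : ∀ n, coeff (n + 1) (qGen q a) = coeff (n + 1) (C c * X * qGen q b) ↔
      a (n + 1) = c * qNum q (n + 1) * b n := fun n => by
    rw [mul_assoc, coeff_C_mul, coeff_succ_X_mul]
    simp only [qGen, coeff_mk, qFact]
    have := qFact_ne_zero hq n
    have := qNum_succ_ne_zero hq n
    constructor <;> intro h <;> field_simp at h ⊢ <;> linear_combination h
  have hconst : coeff 0 (qGen q a) = coeff 0 (C c * X * qGen q b) ↔ a 0 = 0 := by
    simp [qGen, qFact]
  rw [PowerSeries.ext_iff]
  constructor
  · intro h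
    exact ⟨hconst.1 (h 0), fun n => (hcoeff n).1 (h (n + 1))⟩
  · rintro ⟨h0, hsucc⟩ (_ | n)
    · exact hconst.2 h0
    · exact (hcoeff n).2 (hsucc n)

lemma qShift_neg_one_succ (n : ℕ) : qShift (-1) q (n + 1) = qShift (-1) q n * (1 + q ^ n) := by
  simp [qShift, prod_range_succ]

lemma qExp_eq_qGen (x : ℂ) : qExp q x = qGen q fun n => qShift (-1) q n * x ^ n / 2 ^ n := by
  ext n
  simp [qExp, qGen, div_div]

lemma qExp_sub_qExp_mul (hq : ∀ n, q ^ (n + 1) ≠ 1) (x : ℂ) :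
    qExp q x - qExp q (q * x) = C ((1 - q) * x / 2) * X * (qExp q x + qExp q (q * x)) := by
  rw [qExp_eq_qGen, qExp_eq_qGen, qGen_sub, qGen_add, qGen_eq_C_mul_X_mul_qGen_iff hq]
  refine ⟨by simp, fun n => ?_⟩
  have := one_sub_ne_zero_of_pow_succ_ne_one hq
  simp only [Pi.sub_apply, Pi.add_apply, qShift_neg_one_succ, qNum]
  field_simp
  ring

lemma qExp_one_sub_one_ne_zero (hq : ∀ n, q ^ (n + 1) ≠ 1) : qExp q 1 - 1 ≠ 0 := by
  intro h
  have := congrArg (coeff 1) h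
  simp [qExp, qShift, qFact, qNum, div_self (one_sub_ne_zero_of_pow_succ_ne_one hq)] at this

lemma qExp_one_add_one_ne_zero : qExp q 1 + 1 ≠ 0 := by
  intro h
  have := congrArg (coeff 0) h
  norm_num [qExp, qShift, qFact] at this

lemma qDiff_eq_of_qGen_mul_eq (hq : ∀ n, q ^ (n + 1) ≠ 1) {x : ℂ} (hx : x ≠ 0)
    {P D : PowerSeries ℂ} (hD : D ≠ 0) (f : ℂ → ℕ → ℂ) (hf : ∀ y, qGen q (f y) * D = P * qExp q y)
    (n : ℕ) :
    (f x (n + 1) - f (q * x) (n + 1)) / ((1 - q) * x)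
      = qNum q (n + 1) * (f x n + f (q * x) n) / 2 := by
  have hseries : qGen q (f x) - qGen q (f (q * x))
      = C ((1 - q) * x / 2) * X * (qGen q (f x) + qGen q (f (q * x))) := by
    apply mul_right_cancel₀ hD
    calc (qGen q (f x) - qGen q (f (q * x))) * D = P * (qExp q x - qExp q (q * x)) := by
          rw [sub_mul, hf, hf, mul_sub]
      _ = C ((1 - q) * x / 2) * X * (P * qExp q x + P * qExp q (q * x)) := by
          rw [qExp_sub_qExp_mul hq]; ring
      _ = _ := by rw [← hf, ← hf]; ring
  rw [qGen_sub, qGen_add, qGen_eq_C_mul_X_mul_qGen_iff hq] at hseries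
  simp only [Pi.sub_apply, Pi.add_apply] at hseries
  have := one_sub_ne_zero_of_pow_succ_ne_one hq
  rw [div_eq_iff (mul_ne_zero this hx)]
  linear_combination hseries.2 n

end qNonRootOfUnity

theorem qDerivative_formulas_general (q : ℂ) (hq1 : ‖q‖ < 1)
    (B E G : ℂ → ℂ → ℕ → ℂ)
    (hB : ∀ x y : ℂ, qGen q (B x y) * (qExp q 1 - 1) = PowerSeries.X * qExp q x * qExp q y)
    (hE : ∀ x y : ℂ, qGen q (E x y) * (qExp q 1 + 1) = 2 * qExp q x * qExp q y)
    (hG : ∀ x y : ℂ, qGen q (G x y) * (qExp q 1 + 1) = 2 * PowerSeries.X * qExp q x * qExp q y)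
    (n : ℕ) (hn : 1 ≤ n) (x : ℂ) (hx : x ≠ 0) :
    (B x 0 n - B (q * x) 0 n) / ((1 - q) * x)
        = qNum q n * (B x 0 (n - 1) + B (q * x) 0 (n - 1)) / 2 ∧
    (E x 0 n - E (q * x) 0 n) / ((1 - q) * x)
        = qNum q n * (E x 0 (n - 1) + E (q * x) 0 (n - 1)) / 2 ∧
    (G x 0 n - G (q * x) 0 n) / ((1 - q) * x)
        = qNum q n * (G x 0 (n - 1) + G (q * x) 0 (n - 1)) / 2 := by
  have hq := pow_succ_ne_one_of_norm_lt_one hq1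
  obtain ⟨m, rfl⟩ := Nat.exists_eq_add_of_le' hn
  rw [Nat.add_sub_cancel]
  refine ⟨?_, ?_, ?_⟩
  · exact qDiff_eq_of_qGen_mul_eq hq hx (qExp_one_sub_one_ne_zero hq) (fun y => B y 0)
      (P := X * qExp q 0) (fun y => (hB y 0).trans (by ring)) m
  · exact qDiff_eq_of_qGen_mul_eq hq hx qExp_one_add_one_ne_zero (fun y => E y 0)
      (P := 2 * qExp q 0) (fun y => (hE y 0).trans (by ring)) m
  · exact qDiff_eq_of_qGen_mul_eq hq hx qExp_one_add_one_ne_zero (fun y => G y 0)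
      (P := 2 * X * qExp q 0) (fun y => (hG y 0).trans (by ring)) m

/-- `q`-derivative formulas for the `q`-Bernoulli, `q`-Euler and `q`-Genocchi polynomials
(`B_{n,q}(x) := B_{n,q}(x,0)` etc.), where the `q`-derivative of `f` is
`D_{q,x} f(x) = (f(x) - f(qx))/((1-q)x)`. -/
theorem qDerivative_formulas (q : ℂ) (hq0 : 0 < ‖q‖) (hq1 : ‖q‖ < 1)
    (B E G : ℂ → ℂ → ℕ → ℂ)
    (hB : ∀ x y : ℂ, qGen q (B x y) * (qExp q 1 - 1) = PowerSeries.X * qExp q x * qExp q y)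
    (hE : ∀ x y : ℂ, qGen q (E x y) * (qExp q 1 + 1) = 2 * qExp q x * qExp q y)
    (hG : ∀ x y : ℂ, qGen q (G x y) * (qExp q 1 + 1) = 2 * PowerSeries.X * qExp q x * qExp q y)
    (n : ℕ) (hn : 1 ≤ n) (x : ℂ) (hx : x ≠ 0) :
    (B x 0 n - B (q * x) 0 n) / ((1 - q) * x)
        = qNum q n * (B x 0 (n - 1) + B (q * x) 0 (n - 1)) / 2 ∧
    (E x 0 n - E (q * x) 0 n) / ((1 - q) * x)
        = qNum q n * (E x 0 (n - 1) + E (q * x) 0 (n - 1)) / 2 ∧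
    (G x 0 n - G (q * x) 0 n) / ((1 - q) * x)
        = qNum q n * (G x 0 (n - 1) + G (q * x) 0 (n - 1)) / 2 :=
  qDerivative_formulas_general q hq1 B E G hB hE hG n hn x hx
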